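/- arXiv:2404.01153 — 2 statements merged into one kernel-verified Lean document; each statement's English description precedes it below -/
import Mathlib

section
/- Let X ∈ ℝ^{n×p} have independent mean-zero sub-Gaussian rows with covariance Σ whose eigenvalues lie in [1/c, c], and let Σ̂ = X⊤X/n. Then there is a universal constant c1 > 0 such that P( max_{1≤j≤p} (Σ⁻¹)_j Σ̂ (Σ⁻¹)_j⊤ > 2 max_{1≤j≤p} (Σ⁻¹)_{jj} ) ≤ 2 p e^{−c1 n}, where (Σ⁻¹)_j denotes the j-th row of Σ⁻¹. -/
open MeasureTheory ProbabilityTheory Finset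

noncomputable section

/-- The ℓ₁ norm of a vector in `ℝ^p`. -/
def l1 {p : ℕ} (v : Fin p → ℝ) : ℝ := ∑ j, |v j|

/-- The squared ℓ₂ norm of a vector in `ℝ^p`. -/
def l2sq {p : ℕ} (v : Fin p → ℝ) : ℝ := ∑ j, (v j) ^ 2

/-- The ℓ∞ norm of a vector in `ℝ^p`. -/
def linf {p : ℕ} (v : Fin p → ℝ) : ℝ := ⨆ j, |v j|

open Classical in
/-- The ℓ₀ "norm" (number of nonzero coordinates, i.e. the sparsity level). -/
def l0 {p : ℕ} (v : Fin p → ℝ) : ℕ := (Finset.univ.filter fun j => v j ≠ 0).card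

/-- Euclidean inner product. -/
def dot {n : ℕ} (a b : Fin n → ℝ) : ℝ := ∑ i, a i * b i

/-- Quadratic form `v ↦ vᵀ S v`. -/
def quadForm {p : ℕ} (S : Fin p → Fin p → ℝ) (v : Fin p → ℝ) : ℝ :=
  ∑ j, ∑ l, v j * S j l * v l

/-- The sample covariance matrix `XᵀX / n` of a design matrix. -/
def sigHat {n p : ℕ} (X : Fin n → Fin p → ℝ) : Fin p → Fin p → ℝ :=
  fun j l => (1 / (n : ℝ)) * ∑ i, X i j * X i l

/-- Total sample size `N = K n_S + n_T`. -/
def Nn (K nS nT : ℕ) : ℕ := K * nS + nT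

/-- The average model-shift magnitude `h̄ = (n_S/N) ∑_k h_k`. -/
def hbar (nS N : ℕ) {K : ℕ} (h : Fin K → ℝ) : ℝ := ((nS : ℝ) / (N : ℝ)) * ∑ k, h k

variable {Ω : Type} [MeasurableSpace Ω]

/-- Assumption 1 (sub-Gaussian design): the rows of the random design matrix `X` are
independent, mean-zero, have covariance `S`, and are sub-Gaussian (uniform sub-Gaussian
tail, with constant `c`, for all one-dimensional unit-direction marginals). -/
def SubGaussianDesign {n p : ℕ} (μ : Measure Ω) (X : Ω → Fin n → Fin p → ℝ)
    (S : Fin p → Fin p → ℝ) (c : ℝ) : Prop :=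
  (∀ i j, Measurable fun ω => X ω i j) ∧
  iIndepFun
    (fun i ω => X ω i) μ ∧
  (∀ i j, ∫ ω, X ω i j ∂μ = 0) ∧
  (∀ i j l, ∫ ω, X ω i j * X ω i l ∂μ = S j l) ∧
  (∀ i (v : Fin p → ℝ), l2sq v = 1 → ∀ t : ℝ, 0 ≤ t →
    (μ {ω | t ≤ |dot (X ω i) v|}).toReal ≤ 2 * Real.exp (-(t ^ 2) / c))

/-- The covariance matrix `S` is symmetric with all eigenvalues in `[1/c, c]`
(stated via two-sided bounds on its quadratic form). -/
def CovWellConditioned {p : ℕ} (S : Fin p → Fin p → ℝ) (c : ℝ) : Prop :=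
  (∀ j l, S j l = S l j) ∧
  ∀ v : Fin p → ℝ, (1 / c) * l2sq v ≤ quadForm S v ∧ quadForm S v ≤ c * l2sq v

/-- Assumption 2 (Gaussian random errors): the coordinates of the noise vector `ε` are
independent centered Gaussians with variances uniformly bounded by `σ2max`. -/
def GaussianNoiseVec {n : ℕ} (μ : Measure Ω) (ε : Ω → Fin n → ℝ) (σ2max : ℝ) : Prop :=
  ∃ σ2 : Fin n → NNReal, (∀ i, (σ2 i : ℝ) ≤ σ2max) ∧
    (∀ i, Measurable fun ω => ε ω i) ∧
    iIndepFun (fun i ω => ε ω i) μ ∧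
    ∀ i, Measure.map (fun ω => ε ω i) μ = gaussianReal 0 (σ2 i)

/-- The transfer-learning model: one target task (design `X0`, noise `ε0`, parameter `β0`,
`n_T` samples) and `K` source tasks (designs `X k`, noises `ε k`, parameters `β k`,
`n_S` samples each), with population covariances `Sig0` and `Sig k`. -/
structure Model (Ω : Type) [MeasurableSpace Ω] (p K nS nT : ℕ) where
  μ : Measure Ω
  X0 : Ω → Fin nT → Fin p → ℝ
  X : Fin K → Ω → Fin nS → Fin p → ℝ
  ε0 : Ω → Fin nT → ℝ
  ε : Fin K → Ω → Fin nS → ℝ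
  β0 : Fin p → ℝ
  β : Fin K → Fin p → ℝ
  Sig0 : Fin p → Fin p → ℝ
  Sig : Fin K → Fin p → Fin p → ℝ

namespace Model

variable {p K nS nT : ℕ} (M : Model Ω p K nS nT)

/-- Target responses `y⁰ = X⁰β⁰ + ε⁰`. -/
def y0 (ω : Ω) : Fin nT → ℝ := fun i => dot (M.X0 ω i) M.β0 + M.ε0 ω i

/-- Source responses `y^(k) = X^(k)β^(k) + ε^(k)`. -/
def y (k : Fin K) (ω : Ω) : Fin nS → ℝ := fun i => dot (M.X k ω i) (M.β k) + M.ε k ω i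

/-- All noise coordinates (across all tasks) are jointly independent. -/
def AllNoiseIndep : Prop :=
  iIndepFun
    (fun i ω => Sum.elim (fun ki : Fin K × Fin nS => M.ε ki.1 ω ki.2)
      (fun i : Fin nT => M.ε0 ω i) i) M.μ

/-- The noises are independent of the designs. -/
def NoiseIndepDesign : Prop :=
  IndepFun (fun ω => (M.X0 ω, fun k => M.X k ω)) (fun ω => (M.ε0 ω, fun k => M.ε k ω)) M.μ

/-- Assumptions 1 and 2 of the paper, with sub-Gaussian/eigenvalue constant `c` and
noise-variance bound `σ2max`. -/
def Assumptions (c σ2max : ℝ) : Prop :=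
  IsProbabilityMeasure M.μ ∧
  SubGaussianDesign M.μ M.X0 M.Sig0 c ∧
  (∀ k, SubGaussianDesign M.μ (M.X k) (M.Sig k) c) ∧
  CovWellConditioned M.Sig0 c ∧
  (∀ k, CovWellConditioned (M.Sig k) c) ∧
  GaussianNoiseVec M.μ M.ε0 σ2max ∧
  (∀ k, GaussianNoiseVec M.μ (M.ε k) σ2max) ∧
  M.AllNoiseIndep ∧ M.NoiseIndepDesign

/-- The TransFusion step-1 (co-training) objective function (2) of the paper. -/
def obj (lam0 : ℝ) (a : Fin K → ℝ) (ω : Ω) (b0 : Fin p → ℝ) (b : Fin K → Fin p → ℝ) : ℝ :=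
  (1 / (2 * (Nn K nS nT : ℝ))) *
    ((∑ i, (M.y0 ω i - dot (M.X0 ω i) b0) ^ 2) +
      ∑ k, ∑ i, (M.y k ω i - dot (M.X k ω i) (b k)) ^ 2) +
  lam0 * (l1 b0 + ∑ k, a k * l1 fun j => b k j - b0 j)

/-- `(bhat0, bhat)` is a step-1 TransFusion estimator: it minimizes the step-1 objective. -/
def IsStep1Est (lam0 : ℝ) (a : Fin K → ℝ) (bhat0 : Ω → Fin p → ℝ)
    (bhat : Ω → Fin K → Fin p → ℝ) : Prop :=
  ∀ ω b0 b, M.obj lam0 a ω (bhat0 ω) (bhat ω) ≤ M.obj lam0 a ω b0 b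

/-- The population parameter average `w = (n_S/N) ∑_k β^(k) + (n_T/N) β⁰`. -/
def wBar : Fin p → ℝ :=
  fun j => ((nS : ℝ) / (Nn K nS nT : ℝ)) * ∑ k, M.β k j +
    ((nT : ℝ) / (Nn K nS nT : ℝ)) * M.β0 j

/-- The step-2 (local debias) objective function (3) of the paper, for a given first-step
estimator `what`. -/
def obj2 (what : Ω → Fin p → ℝ) (lamT : ℝ) (ω : Ω) (d : Fin p → ℝ) : ℝ :=
  (1 / (2 * (nT : ℝ))) *
    ∑ i, (M.y0 ω i - dot (M.X0 ω i) (what ω) - dot (M.X0 ω i) d) ^ 2 + lamT * l1 d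

/-- `dhat` is a step-2 TransFusion estimator. -/
def IsStep2Est (what : Ω → Fin p → ℝ) (lamT : ℝ) (dhat : Ω → Fin p → ℝ) : Prop :=
  ∀ ω d, M.obj2 what lamT ω (dhat ω) ≤ M.obj2 what lamT ω d

end Model

/-- The averaged estimator `ŵ = (n_S/N) ∑_k β̂^(k) + (n_T/N) β̂⁰`. -/
def wAvg (nS nT : ℕ) {Ω : Type} {p K : ℕ} (bhat0 : Ω → Fin p → ℝ)
    (bhat : Ω → Fin K → Fin p → ℝ) (ω : Ω) : Fin p → ℝ :=
  fun j => ((nS : ℝ) / (Nn K nS nT : ℝ)) * ∑ k, bhat ω k j +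
    ((nT : ℝ) / (Nn K nS nT : ℝ)) * bhat0 ω j

/-!
For a row `v = (Σ⁻¹)_j` one has `vᵀ Σ v = (Σ⁻¹)_{jj}` and `vᵀ Σ̂ v = (1/n) ∑ᵢ ⟨Xᵢ, v⟩²`, so after a
union bound over the `p` rows it suffices to show that, in a fixed unit direction `u`, a sum of `n`
independent squares `Zᵢ² = ⟨Xᵢ, u⟩²` exceeds twice its mean with probability at most `e^{-c₁ n}`.
Integrating the sub-Gaussian tail gives `E exp (θ Z²) ≤ 5` for `θ c ≤ 1/2`; with
`eᵗˣ ≤ 1 + tx + (tx)² eᵗˣ` this yields `E exp (t Z²) ≤ exp (t E Z² + 320 t² c²)` for `t ≤ 1/(4c)`.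
The Chernoff bound at `t = 1/(640 c³)`, together with `E Z² = uᵀ Σ u ≥ 1/c`, then gives the
exponent `-n / (1280 c⁴)`.
-/

open Real Set Filter

lemma exp_le_one_add_add_sq_mul_exp {x : ℝ} (hx : 0 ≤ x) : exp x ≤ 1 + x + x ^ 2 * exp x := by
  rcases le_or_gt 1 x with h | h
  · nlinarith [exp_pos x, mul_le_mul_of_nonneg_right (one_le_pow₀ h : 1 ≤ x ^ 2) (exp_pos x).le]
  · have h1 : 1 - x ≤ exp (-x) := by linarith [add_one_le_exp (-x)]
    have h2 : exp (-x) * exp x = 1 := by rw [← exp_add, neg_add_cancel, exp_zero]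
    nlinarith [exp_pos x, mul_nonneg hx (exp_pos x).le]

lemma sq_le_mul_exp {x a : ℝ} (hx : 0 ≤ x) (ha : 0 < a) : x ^ 2 ≤ (2 / a) ^ 2 * exp (a * x) := by
  have h : x ≤ 2 / a * exp (a * x / 2) := by
    rw [div_mul_eq_mul_div, le_div_iff₀ ha]
    linarith [add_one_le_exp (a * x / 2)]
  calc x ^ 2 ≤ (2 / a * exp (a * x / 2)) ^ 2 := pow_le_pow_left₀ hx h 2
    _ = (2 / a) ^ 2 * exp (a * x) := by rw [mul_pow, sq (exp _), ← exp_add, add_halves]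

lemma exp_mul_le_one_add_mul_add_sq_mul_exp {t x a : ℝ} (ht : 0 ≤ t) (hx : 0 ≤ x) (ha : 0 < a) :
    exp (t * x) ≤ 1 + t * x + (2 / a) ^ 2 * t ^ 2 * exp ((t + a) * x) := by
  calc exp (t * x) ≤ 1 + t * x + t ^ 2 * x ^ 2 * exp (t * x) := by
        rw [← mul_pow]; exact exp_le_one_add_add_sq_mul_exp (by positivity)
    _ ≤ 1 + t * x + t ^ 2 * ((2 / a) ^ 2 * exp (a * x)) * exp (t * x) := by
        gcongr; exact sq_le_mul_exp hx ha
    _ = 1 + t * x + (2 / a) ^ 2 * t ^ 2 * exp ((t + a) * x) := by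
        rw [add_mul, exp_add]; ring

def HasSubgaussianTail (μ : Measure Ω) (Z : Ω → ℝ) (c : ℝ) : Prop :=
  ∀ t : ℝ, 0 ≤ t → (μ {ω | t ≤ |Z ω|}).toReal ≤ 2 * exp (-(t ^ 2) / c)

namespace HasSubgaussianTail

variable {μ : Measure Ω} {Z : Ω → ℝ} {c : ℝ}

lemma mono (hZ : HasSubgaussianTail μ Z c) (hc : 0 < c) {c' : ℝ} (hcc' : c ≤ c') :
    HasSubgaussianTail μ Z c' := fun t ht => by
  refine (hZ t ht).trans (mul_le_mul_of_nonneg_left (exp_le_exp.2 ?_) zero_le_two)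
  rw [neg_div, neg_div, neg_le_neg_iff]
  exact div_le_div_of_nonneg_left (sq_nonneg t) hc hcc'

variable [IsProbabilityMeasure μ]

lemma measure_lt_exp_mul_sq_sub_one_le (hZ : HasSubgaussianTail μ Z c) (hc : 0 < c) {θ : ℝ}
    (hθ : 0 < θ) (hθc : θ * c ≤ 1 / 2) {t : ℝ} (ht : 0 < t) :
    μ {ω | t < exp (θ * Z ω ^ 2) - 1} ≤ ENNReal.ofReal (2 * (1 + t ^ 2)⁻¹) := by
  set s := √(log (1 + t) / θ)
  have hlog : 0 < log (1 + t) := log_pos (by linarith)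
  have hs : s ^ 2 = log (1 + t) / θ := sq_sqrt (by positivity)
  have hsub : {ω | t < exp (θ * Z ω ^ 2) - 1} ⊆ {ω | s ≤ |Z ω|} := fun ω hω => by
    have hZω : log (1 + t) ≤ θ * Z ω ^ 2 := by
      rw [← exp_le_exp, exp_log (by linarith)]
      exact (lt_sub_iff_add_lt'.1 hω).le
    show s ≤ |Z ω|
    rw [← sqrt_sq (abs_nonneg (Z ω)), sq_abs]
    exact sqrt_le_sqrt ((div_le_iff₀' hθ).2 hZω)
  -- `θ c ≤ 1/2` makes the tail at level `s` at most `(1 + t)⁻²`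
  have hexp : exp (-(s ^ 2) / c) ≤ ((1 + t) ^ 2)⁻¹ := by
    have h2 : 2 ≤ 1 / (θ * c) := by rw [le_div_iff₀ (by positivity)]; linarith
    rw [← exp_log (by positivity : (0:ℝ) < (1 + t) ^ 2), ← exp_neg, exp_le_exp, log_pow, hs]
    calc -(log (1 + t) / θ) / c = -(1 / (θ * c) * log (1 + t)) := by field_simp
      _ ≤ -(2 * log (1 + t)) := by gcongr
      _ = -((2 : ℕ) * log (1 + t)) := by norm_num
  calc μ {ω | t < exp (θ * Z ω ^ 2) - 1} ≤ μ {ω | s ≤ |Z ω|} := measure_mono hsub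
    _ = ENNReal.ofReal (μ {ω | s ≤ |Z ω|}).toReal :=
        (ENNReal.ofReal_toReal (measure_ne_top _ _)).symm
    _ ≤ ENNReal.ofReal (2 * (1 + t ^ 2)⁻¹) := by
        gcongr
        calc _ ≤ 2 * exp (-(s ^ 2) / c) := hZ s (sqrt_nonneg _)
          _ ≤ 2 * (1 + t ^ 2)⁻¹ := by
              gcongr
              exact hexp.trans (inv_anti₀ (by positivity) (by nlinarith))

lemma lintegral_exp_mul_sq_le (hZ : HasSubgaussianTail μ Z c) (hZm : Measurable Z) (hc : 0 < c)
    {θ : ℝ} (hθ : 0 < θ) (hθc : θ * c ≤ 1 / 2) :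
    ∫⁻ ω, ENNReal.ofReal (exp (θ * Z ω ^ 2)) ∂μ ≤ 5 := by
  set f := fun ω => exp (θ * Z ω ^ 2) - 1
  have hf : ∀ ω, 0 ≤ f ω := fun ω => sub_nonneg.2 (one_le_exp (by positivity))
  have hsplit : ∀ ω, ENNReal.ofReal (exp (θ * Z ω ^ 2)) = ENNReal.ofReal (f ω) + 1 := fun ω => by
    rw [← ENNReal.ofReal_one, ← ENNReal.ofReal_add (hf ω) zero_le_one, sub_add_cancel]
  have hlayer : ∫⁻ ω, ENNReal.ofReal (f ω) ∂μ = ∫⁻ t in Ioi 0, μ {ω | t < f ω} :=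
    lintegral_eq_lintegral_meas_lt μ (Eventually.of_forall hf) (by fun_prop)
  have harctan : ∫⁻ t in Ioi (0 : ℝ), ENNReal.ofReal (2 * (1 + t ^ 2)⁻¹) ≤ 4 := by
    rw [← ofReal_integral_eq_lintegral_ofReal (integrable_inv_one_add_sq.const_mul 2).integrableOn
      (Eventually.of_forall fun t => by positivity), integral_const_mul,
      integral_Ioi_inv_one_add_sq, arctan_zero, sub_zero, ← ENNReal.ofReal_ofNat]
    exact ENNReal.ofReal_le_ofReal (by linarith [pi_le_four])
  calc ∫⁻ ω, ENNReal.ofReal (exp (θ * Z ω ^ 2)) ∂μ = (∫⁻ t in Ioi 0, μ {ω | t < f ω}) + 1 := by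
        simp_rw [hsplit]
        rw [lintegral_add_right _ measurable_const, lintegral_const, measure_univ, mul_one, hlayer]
    _ ≤ 4 + 1 := by
        gcongr
        exact (setLIntegral_mono (by fun_prop)
          fun t ht => hZ.measure_lt_exp_mul_sq_sub_one_le hc hθ hθc ht).trans harctan
    _ = 5 := by norm_num

lemma integrable_exp_mul_sq (hZ : HasSubgaussianTail μ Z c) (hZm : Measurable Z) (hc : 0 < c)
    {θ : ℝ} (hθ : 0 < θ) (hθc : θ * c ≤ 1 / 2) : Integrable (fun ω => exp (θ * Z ω ^ 2)) μ := by
  refine ⟨by fun_prop, ?_⟩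
  rw [hasFiniteIntegral_iff_ofReal (Eventually.of_forall fun _ => (exp_pos _).le)]
  exact (hZ.lintegral_exp_mul_sq_le hZm hc hθ hθc).trans_lt (by norm_num)

lemma integral_exp_mul_sq_le (hZ : HasSubgaussianTail μ Z c) (hZm : Measurable Z) (hc : 0 < c)
    {θ : ℝ} (hθ : 0 < θ) (hθc : θ * c ≤ 1 / 2) : ∫ ω, exp (θ * Z ω ^ 2) ∂μ ≤ 5 := by
  rw [integral_eq_lintegral_of_nonneg_ae (Eventually.of_forall fun _ => (exp_pos _).le)
    (by fun_prop)]
  exact ENNReal.toReal_le_of_le_ofReal (by norm_num)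
    (by simpa using hZ.lintegral_exp_mul_sq_le hZm hc hθ hθc)

lemma integrable_sq (hZ : HasSubgaussianTail μ Z c) (hZm : Measurable Z) (hc : 0 < c) :
    Integrable (fun ω => Z ω ^ 2) μ := by
  have hθ : 0 < 1 / (2 * c) := by positivity
  refine ((hZ.integrable_exp_mul_sq hZm hc hθ (le_of_eq (by field_simp))).const_mul (2 * c)).mono'
    (by fun_prop) (Eventually.of_forall fun ω => ?_)
  rw [Real.norm_of_nonneg (sq_nonneg _)]
  calc Z ω ^ 2 = 2 * c * (1 / (2 * c) * Z ω ^ 2) := by field_simp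
    _ ≤ 2 * c * exp (1 / (2 * c) * Z ω ^ 2) := by
        gcongr; linarith [add_one_le_exp (1 / (2 * c) * Z ω ^ 2)]

lemma mgf_sq_le (hZ : HasSubgaussianTail μ Z c) (hZm : Measurable Z) (hc : 0 < c) {t : ℝ}
    (ht : 0 < t) (htc : t ≤ 1 / (4 * c)) :
    mgf (fun ω => Z ω ^ 2) μ t ≤ exp (t * μ[fun ω => Z ω ^ 2] + 320 * t ^ 2 * c ^ 2) := by
  set θ := t + 1 / (4 * c)
  have hθ : 0 < θ := by positivity
  have htc' : t * c ≤ 1 / 4 := by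
    have := (le_div_iff₀ (by positivity)).1 htc; linarith
  have hθc : θ * c ≤ 1 / 2 := by
    have : 1 / (4 * c) * c = 1 / 4 := by field_simp
    calc θ * c = t * c + 1 / (4 * c) * c := add_mul _ _ _
      _ ≤ 1 / 2 := by linarith
  have hpt : ∀ ω, exp (t * Z ω ^ 2) ≤
      1 + t * Z ω ^ 2 + 64 * c ^ 2 * t ^ 2 * exp (θ * Z ω ^ 2) := fun ω => by
    have h64 : (2 / (1 / (4 * c))) ^ 2 = 64 * c ^ 2 := by field_simp; ring
    have ha : 0 < 1 / (4 * c) := by positivity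
    simpa only [h64] using exp_mul_le_one_add_mul_add_sq_mul_exp ht.le (sq_nonneg (Z ω)) ha
  have hint2 := hZ.integrable_sq hZm hc
  have hint1 : Integrable (fun ω => 1 + t * Z ω ^ 2) μ :=
    (integrable_const 1).add (hint2.const_mul t)
  have hintθ := hZ.integrable_exp_mul_sq hZm hc hθ hθc
  calc mgf (fun ω => Z ω ^ 2) μ t = ∫ ω, exp (t * Z ω ^ 2) ∂μ := rfl
    _ ≤ ∫ ω, (1 + t * Z ω ^ 2 + 64 * c ^ 2 * t ^ 2 * exp (θ * Z ω ^ 2)) ∂μ :=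
        integral_mono (hZ.integrable_exp_mul_sq hZm hc ht (by linarith))
          (hint1.add (hintθ.const_mul _)) hpt
    _ = 1 + t * μ[fun ω => Z ω ^ 2] + 64 * c ^ 2 * t ^ 2 * ∫ ω, exp (θ * Z ω ^ 2) ∂μ := by
        rw [integral_add hint1 (hintθ.const_mul _),
          integral_add (integrable_const 1) (hint2.const_mul t), integral_const_mul,
          integral_const_mul, integral_const, probReal_univ, one_smul]
    _ ≤ 1 + t * μ[fun ω => Z ω ^ 2] + 64 * c ^ 2 * t ^ 2 * 5 := by
        gcongr; exact hZ.integral_exp_mul_sq_le hZm hc hθ hθc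
    _ ≤ exp (t * μ[fun ω => Z ω ^ 2] + 320 * t ^ 2 * c ^ 2) := by
        linarith [add_one_le_exp (t * μ[fun ω => Z ω ^ 2] + 320 * t ^ 2 * c ^ 2)]

end HasSubgaussianTail

theorem measure_two_mul_lt_sum_sq_le {μ : Measure Ω} [IsProbabilityMeasure μ] {ι : Type*}
    [Fintype ι] {Z : ι → Ω → ℝ} (hind : iIndepFun Z μ) (hZm : ∀ i, Measurable (Z i)) {c : ℝ}
    (hc : 1 ≤ c) (hZ : ∀ i, HasSubgaussianTail μ (Z i) c) {σ2 : ℝ}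
    (hσ2 : ∀ i, μ[fun ω => Z i ω ^ 2] = σ2) (hσ2c : 1 / c ≤ σ2) :
    μ {ω | 2 * Fintype.card ι * σ2 < ∑ i, Z i ω ^ 2} ≤
      ENNReal.ofReal (exp (-(1 / (1280 * c ^ 4)) * Fintype.card ι)) := by
  set n : ℝ := (Fintype.card ι : ℝ)
  have hc0 : 0 < c := by linarith
  set t : ℝ := 1 / (640 * c ^ 3)
  have ht : 0 < t := by positivity
  have htc : t ≤ 1 / (4 * c) := by
    apply one_div_le_one_div_of_le (by positivity)
    nlinarith [one_le_pow₀ (n := 2) hc]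
  have htc' : t * c ≤ 1 / 2 := by
    have := (le_div_iff₀ (by positivity)).1 htc; linarith
  set Y : ι → Ω → ℝ := fun i ω => Z i ω ^ 2
  have hYm : ∀ i, Measurable (Y i) := fun i => (hZm i).pow_const 2
  have hYind : iIndepFun Y μ := hind.comp (fun _ x => x ^ 2) fun _ => measurable_id.pow_const 2
  have hmgf : mgf (∑ i, Y i) μ t ≤ exp (n * (t * σ2 + 320 * t ^ 2 * c ^ 2)) := by
    rw [hYind.mgf_sum hYm, exp_nat_mul, ← Finset.card_univ, ← Finset.prod_const]
    exact Finset.prod_le_prod (fun i _ => mgf_nonneg) fun i _ => by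
      simpa only [hσ2 i] using (hZ i).mgf_sq_le (hZm i) hc0 ht htc
  have hexponent : -t * (2 * n * σ2) + n * (t * σ2 + 320 * t ^ 2 * c ^ 2) ≤
      -(1 / (1280 * c ^ 4)) * n := by
    have h1 : t * (1 / c) = 2 / (1280 * c ^ 4) := by simp only [t]; field_simp; ring
    have h2 : 320 * t ^ 2 * c ^ 2 = 1 / (1280 * c ^ 4) := by simp only [t]; field_simp; ring
    have h3 : t * (1 / c) ≤ t * σ2 := mul_le_mul_of_nonneg_left hσ2c ht.le
    have h4 : 2 / (1280 * c ^ 4) = 2 * (1 / (1280 * c ^ 4)) := by ring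
    calc -t * (2 * n * σ2) + n * (t * σ2 + 320 * t ^ 2 * c ^ 2)
        = -(n * (t * σ2 - 320 * t ^ 2 * c ^ 2)) := by ring
      _ ≤ -(n * (1 / (1280 * c ^ 4))) :=
          neg_le_neg (mul_le_mul_of_nonneg_left (by linarith) (Nat.cast_nonneg _))
      _ = -(1 / (1280 * c ^ 4)) * n := by ring
  have hchernoff := measure_ge_le_exp_mul_mgf (2 * n * σ2) ht.le
    (hYind.integrable_exp_mul_sum hYm (s := Finset.univ) fun i _ =>
      (hZ i).integrable_exp_mul_sq (hZm i) hc0 ht htc')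
  calc μ {ω | 2 * n * σ2 < ∑ i, Z i ω ^ 2} ≤ μ {ω | 2 * n * σ2 ≤ (∑ i, Y i) ω} :=
        measure_mono fun ω hω => by simpa [Y, Finset.sum_apply] using hω.le
    _ = ENNReal.ofReal (μ.real {ω | 2 * n * σ2 ≤ (∑ i, Y i) ω}) := (ofReal_measureReal).symm
    _ ≤ ENNReal.ofReal (exp (-(1 / (1280 * c ^ 4)) * n)) := by
        gcongr
        calc _ ≤ exp (-t * (2 * n * σ2)) * mgf (∑ i, Y i) μ t := hchernoff
          _ ≤ exp (-t * (2 * n * σ2)) * exp (n * (t * σ2 + 320 * t ^ 2 * c ^ 2)) := by gcongr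
          _ ≤ _ := by rw [← exp_add]; exact exp_le_exp.2 hexponent

section QuadraticForms

open Matrix

variable {p : ℕ}

lemma dot_eq_dotProduct {n : ℕ} (a b : Fin n → ℝ) : dot a b = a ⬝ᵥ b := rfl

lemma l2sq_eq_dotProduct_self (v : Fin p → ℝ) : l2sq v = v ⬝ᵥ v := by
  simp only [l2sq, dotProduct, sq]

lemma l2sq_pos {v : Fin p → ℝ} (hv : v ≠ 0) : 0 < l2sq v := by
  obtain ⟨j, hj⟩ := Function.ne_iff.1 hv
  exact Finset.sum_pos' (fun j _ => sq_nonneg (v j)) ⟨j, Finset.mem_univ j, sq_pos_of_ne_zero hj⟩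

lemma l2sq_smul (r : ℝ) (v : Fin p → ℝ) : l2sq (r • v) = r ^ 2 * l2sq v := by
  simp only [l2sq_eq_dotProduct_self, smul_dotProduct, dotProduct_smul, smul_eq_mul]; ring

lemma l2sq_single (j : Fin p) : l2sq (Pi.single j 1 : Fin p → ℝ) = 1 := by
  simp [l2sq_eq_dotProduct_self]

lemma quadForm_eq_dotProduct_mulVec (S : Matrix (Fin p) (Fin p) ℝ) (v : Fin p → ℝ) :
    quadForm S v = v ⬝ᵥ (S *ᵥ v) := by
  simp only [quadForm, dotProduct, mulVec, Finset.mul_sum, mul_assoc]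

lemma quadForm_smul (S : Fin p → Fin p → ℝ) (r : ℝ) (v : Fin p → ℝ) :
    quadForm S (r • v) = r ^ 2 * quadForm S v := by
  simp only [quadForm, Pi.smul_apply, smul_eq_mul, Finset.mul_sum]
  exact Finset.sum_congr rfl fun j _ => Finset.sum_congr rfl fun l _ => by ring

lemma quadForm_sigHat {n : ℕ} (Y : Fin n → Fin p → ℝ) (v : Fin p → ℝ) :
    quadForm (sigHat Y) v = 1 / n * ∑ i, dot (Y i) v ^ 2 := by
  have : sigHat Y = (1 / (n : ℝ)) • ((of Y)ᵀ * of Y) := by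
    ext j l; simp [sigHat, Matrix.mul_apply]
  rw [this, quadForm_eq_dotProduct_mulVec, smul_mulVec, dotProduct_smul, ← mulVec_mulVec,
    dotProduct_mulVec, vecMul_transpose, smul_eq_mul]
  simp [dotProduct, mulVec, dot, sq]

lemma quadForm_nonsing_inv_row {S : Matrix (Fin p) (Fin p) ℝ} (hS : IsUnit S.det) (j : Fin p) :
    quadForm S (S⁻¹ j) = S⁻¹ j j := by
  rw [quadForm_eq_dotProduct_mulVec, dotProduct_mulVec, ← mul_apply_eq_vecMul, nonsing_inv_mul S hS]
  simp [Matrix.one_apply, dotProduct]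

lemma CovWellConditioned.posDef {S : Matrix (Fin p) (Fin p) ℝ} {c : ℝ}
    (h : CovWellConditioned S c) (hc : 0 < c) : S.PosDef := by
  refine posDef_iff_dotProduct_mulVec.2 ⟨IsHermitian.ext fun i j => h.1 j i, fun x hx => ?_⟩
  rw [star_trivial, ← quadForm_eq_dotProduct_mulVec]
  have := l2sq_pos hx
  exact (by positivity : 0 < 1 / c * l2sq x).trans_le (h.2 x).1

end QuadraticForms

namespace SubGaussianDesign

variable {n p : ℕ} {μ : Measure Ω} {X : Ω → Fin n → Fin p → ℝ} {S : Fin p → Fin p → ℝ} {c : ℝ}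

lemma measurable_dot (h : SubGaussianDesign μ X S c) (i : Fin n) (u : Fin p → ℝ) :
    Measurable fun ω => dot (X ω i) u :=
  Finset.measurable_sum _ fun j _ => (h.1 i j).mul_const (u j)

lemma hasSubgaussianTail_dot (h : SubGaussianDesign μ X S c) (i : Fin n) {u : Fin p → ℝ}
    (hu : l2sq u = 1) : HasSubgaussianTail μ (fun ω => dot (X ω i) u) c :=
  h.2.2.2.2 i u hu

variable [IsProbabilityMeasure μ]

lemma memLp_two_apply (h : SubGaussianDesign μ X S c) (hc : 0 < c) (i : Fin n) (j : Fin p) :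
    MemLp (fun ω => X ω i j) 2 μ := by
  refine (memLp_two_iff_integrable_sq (h.1 i j).aestronglyMeasurable).2 ?_
  simpa [dot_eq_dotProduct] using
    (h.hasSubgaussianTail_dot i (l2sq_single j)).integrable_sq (h.measurable_dot i _) hc

lemma integral_dot_sq (h : SubGaussianDesign μ X S c) (hc : 0 < c) (i : Fin n) (u : Fin p → ℝ) :
    μ[fun ω => dot (X ω i) u ^ 2] = quadForm S u := by
  have hint : ∀ j l, Integrable (fun ω => u j * u l * (X ω i j * X ω i l)) μ := fun j l =>
    ((h.memLp_two_apply hc i j).integrable_mul (h.memLp_two_apply hc i l)).const_mul _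
  calc μ[fun ω => dot (X ω i) u ^ 2]
      = ∫ ω, ∑ j, ∑ l, u j * u l * (X ω i j * X ω i l) ∂μ := by
        congr 1 with ω
        simp only [dot, sq, Finset.sum_mul_sum]
        exact Finset.sum_congr rfl fun j _ => Finset.sum_congr rfl fun l _ => by ring
    _ = ∑ j, ∑ l, u j * u l * S j l := by
        rw [integral_finsetSum _ fun j _ => integrable_finsetSum _ fun l _ => hint j l]
        simp_rw [integral_finsetSum _ fun l _ => hint _ l, integral_const_mul, h.2.2.2.1 i]
    _ = quadForm S u := Finset.sum_congr rfl fun j _ => Finset.sum_congr rfl fun l _ => by ring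

lemma measure_two_mul_quadForm_lt_le_of_l2sq_eq_one (h : SubGaussianDesign μ X S c)
    (hS : CovWellConditioned S c) (hc : 0 < c) {C : ℝ} (hcC : c ≤ C) (hC : 1 ≤ C)
    {u : Fin p → ℝ} (hu : l2sq u = 1) :
    μ {ω | 2 * quadForm S u < quadForm (sigHat (X ω)) u} ≤
      ENNReal.ofReal (exp (-(1 / (1280 * C ^ 4)) * n)) := by
  rcases n.eq_zero_or_pos with rfl | hn
  · simpa using prob_le_one
  have hσ2 : 1 / C ≤ quadForm S u :=
    (one_div_le_one_div_of_le hc hcC).trans (by simpa [hu] using (hS.2 u).1)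
  have hevent : {ω | 2 * quadForm S u < quadForm (sigHat (X ω)) u} =
      {ω | 2 * Fintype.card (Fin n) * quadForm S u < ∑ i, dot (X ω i) u ^ 2} := by
    ext ω
    rw [Set.mem_ofPred_eq, Set.mem_ofPred_eq, quadForm_sigHat, one_div_mul_eq_div,
      lt_div_iff₀ (by positivity), Fintype.card_fin, mul_right_comm]
  rw [hevent]
  simpa only [Fintype.card_fin] using measure_two_mul_lt_sum_sq_le
    (Z := fun i ω => dot (X ω i) u)
    (h.2.1.comp (fun _ x => dot x u) fun _ => by unfold dot; fun_prop)
    (h.measurable_dot · u) hC (fun i => (h.hasSubgaussianTail_dot i hu).mono hc hcC)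
    (fun i => h.integral_dot_sq hc i u) hσ2

lemma measure_two_mul_quadForm_lt_le (h : SubGaussianDesign μ X S c)
    (hS : CovWellConditioned S c) (hc : 0 < c) {C : ℝ} (hcC : c ≤ C) (hC : 1 ≤ C)
    (v : Fin p → ℝ) :
    μ {ω | 2 * quadForm S v < quadForm (sigHat (X ω)) v} ≤
      ENNReal.ofReal (exp (-(1 / (1280 * C ^ 4)) * n)) := by
  rcases eq_or_ne v 0 with rfl | hv
  · simp [quadForm]
  -- both quadratic forms are homogeneous of degree 2, so `v` may be normalised
  set r := √(l2sq v)
  have hr : 0 < r := sqrt_pos.2 (l2sq_pos hv)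
  have hu : l2sq (r⁻¹ • v) = 1 := by
    rw [l2sq_smul, inv_pow, sq_sqrt (l2sq_pos hv).le, inv_mul_cancel₀ (l2sq_pos hv).ne']
  refine le_of_eq_of_le ?_ (h.measure_two_mul_quadForm_lt_le_of_l2sq_eq_one hS hc hcC hC hu)
  congr 1 with ω
  conv_lhs => rw [← smul_inv_smul₀ hr.ne' v]
  rw [Set.mem_ofPred_eq, Set.mem_ofPred_eq, quadForm_smul S r, quadForm_smul (sigHat (X ω)) r,
    mul_left_comm, mul_lt_mul_iff_right₀ (pow_pos hr 2)]

end SubGaussianDesign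

lemma setOf_two_mul_iSup_lt_iSup_subset {ι α : Type*} [Finite ι] (a : ι → ℝ) (f : α → ι → ℝ) :
    {x | 2 * ⨆ i, a i < ⨆ i, f x i} ⊆ ⋃ i, {x | 2 * a i < f x i} := by
  intro x (hx : 2 * ⨆ i, a i < ⨆ i, f x i)
  cases isEmpty_or_nonempty ι
  · simp [Real.iSup_of_isEmpty] at hx
  obtain ⟨i, hi⟩ := exists_lt_of_lt_ciSup hx
  have hai : a i ≤ ⨆ i, a i := le_ciSup (Set.finite_range a).bddAbove i
  exact Set.mem_iUnion.2 ⟨i, show 2 * a i < f x i by linarith⟩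

/-- Lemma 6, concentration of the sample covariance along the rows of
the inverse covariance: `P( max_j (Σ⁻¹)_j Σ̂ (Σ⁻¹)_jᵀ > 2 max_j (Σ⁻¹)_{jj} ) ≤ 2p e^{−c1 n}`. -/
theorem inverse_covariance_concentration (c : ℝ) (hc : 0 < c) :
    ∃ c1 : ℝ, 0 < c1 ∧
      ∀ (Ω : Type) [MeasurableSpace Ω] (n p : ℕ) (μ : Measure Ω)
        (X : Ω → Fin n → Fin p → ℝ) (Sig : Matrix (Fin p) (Fin p) ℝ),
        IsProbabilityMeasure μ →
        SubGaussianDesign μ X (fun j l => Sig j l) c →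
        CovWellConditioned (fun j l => Sig j l) c →
        μ {ω | 2 * (⨆ l, Sig⁻¹ l l) <
            ⨆ j, quadForm (sigHat (X ω)) fun a => Sig⁻¹ j a} ≤
          ENNReal.ofReal (2 * (p : ℝ) * Real.exp (-c1 * n)) := by
  set C := max c 1
  refine ⟨1 / (1280 * C ^ 4), by positivity, fun Ω _ n p μ X Sig _ hX hSig => ?_⟩
  have hdet : IsUnit Sig.det := (Matrix.isUnit_iff_isUnit_det _).1 (hSig.posDef hc).isUnit
  have hrow (j : Fin p) := hX.measure_two_mul_quadForm_lt_le hSig hc (le_max_left c 1)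
    (le_max_right c 1) (Sig⁻¹ j)
  calc _ ≤ μ (⋃ j, {ω | 2 * Sig⁻¹ j j < quadForm (sigHat (X ω)) (Sig⁻¹ j)}) :=
        measure_mono (setOf_two_mul_iSup_lt_iSup_subset _ _)
    _ ≤ ∑ j, μ {ω | 2 * Sig⁻¹ j j < quadForm (sigHat (X ω)) (Sig⁻¹ j)} :=
        measure_iUnion_fintype_le _ _
    _ ≤ ∑ _j : Fin p, ENNReal.ofReal (exp (-(1 / (1280 * C ^ 4)) * n)) :=
        Finset.sum_le_sum fun j _ => by rw [← quadForm_nonsing_inv_row hdet j]; exact hrow j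
    _ ≤ ENNReal.ofReal (2 * p * exp (-(1 / (1280 * C ^ 4)) * n)) := by
        rw [Finset.sum_const, Finset.card_univ, Fintype.card_fin, nsmul_eq_mul,
          ← ENNReal.ofReal_natCast, ← ENNReal.ofReal_mul (by positivity)]
        gcongr
        exact le_mul_of_one_le_left (Nat.cast_nonneg p) one_le_two
end
end

section
/- Let p ≥ 2, let A be the p × p arrowhead matrix with ones on the diagonal and in the first row and first column and zeros elsewhere, fix c ∈ (0, 1), set α = c/√(p − 1), and define Σ¹ = αA + (1 − α)I and Σ⁰ = I. Then: (i) Λ_min(Σ¹) = 1 − c and Λ_max(Σ¹) = 1 + c; and (ii) the covariate-shift factor C_Σ := 1 + max_{1≤j≤p} ‖e_j⊤ (Σ¹ − Σ⁰)(Σ¹)⁻¹‖₁ satisfies a1 √p ≤ C_Σ ≤ a2 √p for constants a1, a2 > 0 depending only on c; in particular C_Σ diverges with p. -/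
/-!
Write `Σ¹ = 1 + α N` with `N = e uᵀ + u eᵀ` the adjacency matrix of the star graph centred at the
first coordinate: `e` is the first basis vector and `u` the indicator of the `p - 1` leaves. Since
`eᵀe = 1`, `eᵀu = 0` and `uᵀu = p - 1`, we get `N³ = (p - 1) N`, hence
`(Σ¹ - 1)³ = c² (Σ¹ - 1)`: every eigenvalue of `Σ¹` is one of `1 - c, 1, 1 + c`, and
`√(p - 1) e ± u` are eigenvectors for `1 ± c`.

The same cubic relation inverts `Σ¹` explicitly, `(Σ¹)⁻¹ = 1 + (α² N² - α N) / (1 - c²)`, so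
`(Σ¹ - 1)(Σ¹)⁻¹ = 1 - (Σ¹)⁻¹ = (α N - α² N²) / (1 - c²)`. Its largest absolute row sum is the one of
the centre, `(c √(p - 1) + c²) / (1 - c²)`, so `C_Σ = (1 + c √(p - 1)) / (1 - c²)`, of order `√p`.
-/

open Finset

noncomputable section
/-- The `p × p` arrowhead matrix with ones on the diagonal and in the first row and
first column, and zeros elsewhere. -/
def arrowhead (p : ℕ) : Matrix (Fin p) (Fin p) ℝ :=
  Matrix.of fun i j => if i = j ∨ i.val = 0 ∨ j.val = 0 then (1 : ℝ) else 0

/-- The source covariance `Σ¹ = αA + (1−α)I` with `α = c/√(p−1)`. -/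
def shiftedCov (p : ℕ) (c : ℝ) : Matrix (Fin p) (Fin p) ℝ :=
  (c / Real.sqrt ((p : ℝ) - 1)) • arrowhead p +
    (1 - c / Real.sqrt ((p : ℝ) - 1)) • (1 : Matrix (Fin p) (Fin p) ℝ)

/-- The covariate-shift factor `C_Σ = 1 + max_j ‖e_jᵀ(Σ¹ − Σ⁰)(Σ¹)⁻¹‖₁` for the single
source case with `Σ⁰ = I`. -/
def covShiftFactor (p : ℕ) (c : ℝ) : ℝ :=
  1 + ⨆ j : Fin p, ∑ l,
    |((shiftedCov p c - 1) * (shiftedCov p c)⁻¹) j l|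

open Matrix Polynomial

namespace Matrix.IsHermitian

variable {n : Type*} [Fintype n] [DecidableEq n] {A : Matrix n n ℝ} (hA : A.IsHermitian)

lemma eval_eigenvalues_eq_zero {q : ℝ[X]} (hq : aeval A q = 0) (i : n) :
    q.eval (hA.eigenvalues i) = 0 := by
  have : Nonempty n := ⟨i⟩
  simpa [hq, spectrum.zero_eq] using
    spectrum.subset_polynomial_aeval A q ⟨_, hA.eigenvalues_mem_spectrum_real i, rfl⟩

lemma eigenvalues_mem_Icc_of_pow_three {t r : ℝ} (hr : 0 ≤ r)
    (h : (A - t • 1) ^ 3 = r ^ 2 • (A - t • 1)) (i : n) :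
    hA.eigenvalues i ∈ Set.Icc (t - r) (t + r) := by
  have hroot := hA.eval_eigenvalues_eq_zero (q := (X - C t) ^ 3 - r ^ 2 • (X - C t))
    (by simp [Algebra.algebraMap_eq_smul_one, h]) i
  simp only [eval_sub, eval_pow, eval_smul, eval_X, eval_C, smul_eq_mul] at hroot
  have hfactor : (hA.eigenvalues i - t) *
      ((hA.eigenvalues i - (t - r)) * (hA.eigenvalues i - (t + r))) = 0 := by
    linear_combination hroot
  rcases mul_eq_zero.mp hfactor with h | h
  · constructor <;> linarith
  rcases mul_eq_zero.mp h with h | h <;> constructor <;> linarith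

lemma exists_eigenvalues_eq {μ : ℝ} {w : n → ℝ} (hw : w ≠ 0) (h : A *ᵥ w = μ • w) :
    ∃ i, hA.eigenvalues i = μ := by
  have : Module.End.HasEigenvalue (toLin' A) μ :=
    Module.End.hasEigenvalue_of_hasEigenvector
      ⟨Module.End.mem_eigenspace_iff.mpr (by simpa using h), hw⟩
  rw [← Set.mem_range, ← hA.spectrum_real_eq_range_eigenvalues, ← spectrum_toLin']
  exact this.mem_spectrum

end Matrix.IsHermitian

lemma one_add_smul_mul_eq_one {K R : Type*} [Field K] [Ring R] [Algebra K R] {N : R} {m a : K}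
    (hN : N ^ 3 = m • N) (hd : 1 - a ^ 2 * m ≠ 0) :
    (1 + a • N) * (1 + (1 - a ^ 2 * m)⁻¹ • (a ^ 2 • N ^ 2 - a • N)) = 1 := by
  have h2 : N * N = N ^ 2 := (sq N).symm
  have h3 : N * N ^ 2 = m • N := by rw [← pow_succ', hN]
  simp only [add_mul, mul_add, one_mul, mul_one, mul_sub, mul_smul_comm, smul_mul_assoc, h2, h3]
  match_scalars <;> field_simp <;> ring

lemma card_sub_one_nonneg {n : Type*} [Fintype n] (j : n) : (0 : ℝ) ≤ Fintype.card n - 1 :=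
  sub_nonneg.mpr (Nat.one_le_cast.mpr (Fintype.card_pos_iff.mpr ⟨j⟩))

section StarGraph

variable {n : Type*} [DecidableEq n] (i₀ : n)

def leafIndicator : n → ℝ := fun j => if j = i₀ then 0 else 1

@[simp]
lemma leafIndicator_self : leafIndicator i₀ i₀ = 0 := if_pos rfl

/-- The adjacency matrix of the star graph with centre `i₀`. -/
def starMatrix : Matrix n n ℝ :=
  vecMulVec (Pi.single i₀ 1) (leafIndicator i₀) + vecMulVec (leafIndicator i₀) (Pi.single i₀ 1)

variable [Fintype n]

lemma sum_leafIndicator : ∑ j, leafIndicator i₀ j = Fintype.card n - 1 := by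
  simp [leafIndicator, sum_ite, filter_ne', card_erase_of_mem,
    Nat.cast_pred (Fintype.card_pos_iff.mpr ⟨i₀⟩)]

lemma leafIndicator_dotProduct_self :
    leafIndicator i₀ ⬝ᵥ leafIndicator i₀ = Fintype.card n - 1 := by
  rw [← sum_leafIndicator i₀]
  exact sum_congr rfl fun j _ => by by_cases h : j = i₀ <;> simp [leafIndicator, h]

lemma starMatrix_sq : starMatrix i₀ ^ 2 =
    ((Fintype.card n : ℝ) - 1) • vecMulVec (Pi.single i₀ 1) (Pi.single i₀ 1) +
      vecMulVec (leafIndicator i₀) (leafIndicator i₀) := by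
  simp only [starMatrix, sq, add_mul, mul_add, vecMulVec_mul_vecMulVec, single_dotProduct,
    dotProduct_single, leafIndicator_self, leafIndicator_dotProduct_self, Pi.single_eq_same,
    mul_zero, mul_one, zero_smul, one_smul, vecMulVec_zero, vecMulVec_smul, add_zero]
  abel

lemma starMatrix_pow_three :
    starMatrix i₀ ^ 3 = ((Fintype.card n : ℝ) - 1) • starMatrix i₀ := by
  rw [pow_succ', starMatrix_sq]
  simp only [starMatrix, add_mul, mul_add, mul_smul_comm, vecMulVec_mul_vecMulVec,
    single_dotProduct, dotProduct_single, leafIndicator_self, leafIndicator_dotProduct_self,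
    Pi.single_eq_same, mul_zero, mul_one, zero_smul, one_smul, vecMulVec_zero,
    vecMulVec_smul, add_zero, zero_add, smul_add]
  abel

lemma starMatrix_mulVec (w : n → ℝ) :
    starMatrix i₀ *ᵥ w = (leafIndicator i₀ ⬝ᵥ w) • Pi.single i₀ 1 + w i₀ • leafIndicator i₀ := by
  simp [starMatrix, add_mulVec, vecMulVec_mulVec]

lemma starMatrix_mulVec_eigenvector {σ : ℝ} (hσ : σ ^ 2 = 1) :
    starMatrix i₀ *ᵥ (√((Fintype.card n : ℝ) - 1) • Pi.single i₀ 1 + σ • leafIndicator i₀) =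
      (σ * √((Fintype.card n : ℝ) - 1)) •
        (√((Fintype.card n : ℝ) - 1) • Pi.single i₀ 1 + σ • leafIndicator i₀) := by
  rw [starMatrix_mulVec]
  simp only [dotProduct_add, dotProduct_smul, dotProduct_single, leafIndicator_self,
    leafIndicator_dotProduct_self, Pi.add_apply, Pi.smul_apply, Pi.single_eq_same, smul_eq_mul]
  match_scalars
  · linear_combination (-σ) * Real.mul_self_sqrt (card_sub_one_nonneg i₀)
  · linear_combination (-√((Fintype.card n : ℝ) - 1)) * hσ

/- The two summands have disjoint supports (the edges of the star, and the centre or pairs of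
leaves), so the absolute value splits. -/
lemma abs_smul_starMatrix_sub_smul_sq_apply {a : ℝ} (ha : 0 ≤ a) (i j : n) :
    |(a • starMatrix i₀ - a ^ 2 • starMatrix i₀ ^ 2) i j| =
      a * ((Pi.single i₀ 1 : n → ℝ) i * leafIndicator i₀ j +
          leafIndicator i₀ i * (Pi.single i₀ 1 : n → ℝ) j) +
        a ^ 2 * ((Fintype.card n - 1) * (Pi.single i₀ 1 : n → ℝ) i * (Pi.single i₀ 1 : n → ℝ) j +
          leafIndicator i₀ i * leafIndicator i₀ j) := by
  have hm := card_sub_one_nonneg i₀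
  rw [starMatrix_sq]
  by_cases hi : i = i₀ <;> by_cases hj : j = i₀ <;>
    simp [starMatrix, vecMulVec_apply, hi, hj, leafIndicator, abs_of_nonneg, ha, hm]

lemma sum_abs_smul_starMatrix_sub_smul_sq_apply {a : ℝ} (ha : 0 ≤ a) (i : n) :
    ∑ j, |(a • starMatrix i₀ - a ^ 2 • starMatrix i₀ ^ 2) i j| =
      a * ((Fintype.card n - 1) * (Pi.single i₀ 1 : n → ℝ) i + leafIndicator i₀ i) +
        a ^ 2 * (Fintype.card n - 1) := by
  simp only [abs_smul_starMatrix_sub_smul_sq_apply i₀ ha, sum_add_distrib, ← mul_sum,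
    sum_leafIndicator, sum_pi_single', mem_univ, if_true]
  by_cases hi : i = i₀ <;> simp [hi, leafIndicator]

lemma iSup_sum_abs_sub_one_mul_inv_one_add_smul_starMatrix {a : ℝ} (ha : 0 ≤ a)
    (hd : a ^ 2 * (Fintype.card n - 1) < 1) :
    ⨆ i, ∑ j, |((1 + a • starMatrix i₀ - 1) * (1 + a • starMatrix i₀)⁻¹) i j| =
      (a * (Fintype.card n - 1) + a ^ 2 * (Fintype.card n - 1)) /
        (1 - a ^ 2 * (Fintype.card n - 1)) := by
  set k := (1 - a ^ 2 * ((Fintype.card n : ℝ) - 1))⁻¹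
  have hk : 0 < k := inv_pos.mpr (by linarith)
  have hmul := one_add_smul_mul_eq_one (a := a) (starMatrix_pow_three i₀) (by linarith)
  have hM : (1 + a • starMatrix i₀ - 1) * (1 + a • starMatrix i₀)⁻¹ =
      k • (a • starMatrix i₀ - a ^ 2 • starMatrix i₀ ^ 2) := by
    rw [inv_eq_right_inv hmul, sub_mul, hmul, one_mul]
    module
  simp only [hM, Matrix.smul_apply, smul_eq_mul, abs_mul, abs_of_pos hk, ← mul_sum,
    sum_abs_smul_starMatrix_sub_smul_sq_apply i₀ ha]
  have hrow : ∀ i,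
      a * ((Fintype.card n - 1) * (Pi.single i₀ 1 : n → ℝ) i + leafIndicator i₀ i) ≤
        a * ((Fintype.card n - 1) * (Pi.single i₀ 1 : n → ℝ) i₀ + leafIndicator i₀ i₀) := by
    intro i
    by_cases hi : i = i₀
    · rw [hi]
    · have hn : (2 : ℝ) ≤ Fintype.card n := by
        exact_mod_cast Fintype.one_lt_card_iff.mpr ⟨i, i₀, hi⟩
      simpa [hi, leafIndicator] using mul_le_mul_of_nonneg_left (by linarith : (1 : ℝ) ≤ _) ha
  have : Nonempty n := ⟨i₀⟩
  refine (le_antisymm (ciSup_le fun i => ?_) (le_ciSup (Finite.bddAbove_range _) i₀)).trans ?_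
  · exact mul_le_mul_of_nonneg_left (by linarith [hrow i]) hk.le
  · simp [k, div_eq_inv_mul]

end StarGraph

lemma arrowhead_isSymm (p : ℕ) : (arrowhead p).IsSymm :=
  IsSymm.ext fun i j => by
    simp only [arrowhead, of_apply, eq_comm (a := j), or_comm (a := j.val = 0)]

lemma shiftedCov_isHermitian (p : ℕ) (c : ℝ) : (shiftedCov p c).IsHermitian :=
  isHermitian_iff_isSymm.mpr (((arrowhead_isSymm p).smul _).add (isSymm_one.smul _))

lemma arrowhead_eq_one_add_starMatrix {p : ℕ} (hp : 0 < p) :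
    arrowhead p = 1 + starMatrix ⟨0, hp⟩ := by
  ext i j
  simp only [arrowhead, starMatrix, Matrix.add_apply, one_apply, of_apply, vecMulVec_apply,
    leafIndicator, Pi.single_apply, Fin.ext_iff]
  split_ifs <;> norm_num <;> omega

lemma shiftedCov_eq {p : ℕ} (hp : 0 < p) (c : ℝ) :
    shiftedCov p c = 1 + (c / √((p : ℝ) - 1)) • starMatrix ⟨0, hp⟩ := by
  rw [shiftedCov, arrowhead_eq_one_add_starMatrix hp]
  module

lemma div_sqrt_sq_mul {c m : ℝ} (hm : 0 < m) : (c / √m) ^ 2 * m = c ^ 2 := by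
  rw [div_pow, Real.sq_sqrt hm.le, div_mul_cancel₀ _ hm.ne']

lemma natCast_sub_one_pos {p : ℕ} (hp : 2 ≤ p) : (0 : ℝ) < p - 1 := by
  have : (2 : ℝ) ≤ p := by exact_mod_cast hp
  linarith

lemma shiftedCov_sub_one_pow_three {p : ℕ} (hp : 2 ≤ p) (c : ℝ) :
    (shiftedCov p c - 1) ^ 3 = c ^ 2 • (shiftedCov p c - 1) := by
  rw [shiftedCov_eq (by omega) c, add_sub_cancel_left, _root_.smul_pow, starMatrix_pow_three,
    smul_smul, smul_smul, Fintype.card_fin]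
  congr 1
  linear_combination (c / √((p : ℝ) - 1)) * div_sqrt_sq_mul (c := c) (natCast_sub_one_pos hp)

lemma exists_shiftedCov_eigenvalues_eq {p : ℕ} (hp : 2 ≤ p) (c : ℝ) {σ : ℝ} (hσ : σ ^ 2 = 1) :
    ∃ i, (shiftedCov_isHermitian p c).eigenvalues i = 1 + σ * c := by
  have hm : 0 < √((p : ℝ) - 1) := Real.sqrt_pos.mpr (natCast_sub_one_pos hp)
  set i₀ : Fin p := ⟨0, by omega⟩
  set w := √((p : ℝ) - 1) • Pi.single i₀ 1 + σ • leafIndicator i₀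
  have hw : w ≠ 0 := fun h => by simpa [w, leafIndicator, hm.ne'] using congrFun h i₀
  have hN := starMatrix_mulVec_eigenvector i₀ hσ
  rw [Fintype.card_fin] at hN
  refine (shiftedCov_isHermitian p c).exists_eigenvalues_eq hw ?_
  rw [shiftedCov_eq (by omega) c, add_mulVec, one_mulVec, smul_mulVec, hN, smul_smul,
    show c / √((p : ℝ) - 1) * (σ * √((p : ℝ) - 1)) = σ * c by field_simp]
  module

lemma covShiftFactor_eq {p : ℕ} (hp : 2 ≤ p) {c : ℝ} (hc0 : 0 ≤ c) (hc1 : c < 1) :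
    covShiftFactor p c = (1 + c * √((p : ℝ) - 1)) / (1 - c ^ 2) := by
  have hm := natCast_sub_one_pos hp
  have ha2m := div_sqrt_sq_mul (c := c) hm
  have hd : 0 < 1 - c ^ 2 := by nlinarith
  rw [covShiftFactor, shiftedCov_eq (by omega) c,
    iSup_sum_abs_sub_one_mul_inv_one_add_smul_starMatrix _ (by positivity)
      (by rw [Fintype.card_fin]; linarith)]
  simp only [Fintype.card_fin, ha2m]
  field_simp
  linear_combination (-c) * Real.mul_self_sqrt hm.le

lemma mul_sqrt_le_one_add_mul_sqrt_sub_one_div {c x : ℝ} (hc0 : 0 ≤ c) (hc1 : c < 1)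
    (hx : 2 ≤ x) : c / 2 * √x ≤ (1 + c * √(x - 1)) / (1 - c ^ 2) := by
  have hsqrt : √x ≤ 2 * √(x - 1) := by
    rw [show 2 * √(x - 1) = √(2 ^ 2 * (x - 1)) by simp]
    exact Real.sqrt_le_sqrt (by linarith)
  rw [le_div_iff₀ (by nlinarith)]
  calc c / 2 * √x * (1 - c ^ 2) ≤ c / 2 * √x :=
        mul_le_of_le_one_right (by positivity) (by nlinarith)
    _ ≤ c * √(x - 1) := by nlinarith [mul_le_mul_of_nonneg_left hsqrt hc0]
    _ ≤ 1 + c * √(x - 1) := by linarith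

lemma one_add_mul_sqrt_sub_one_div_le {c x : ℝ} (hc0 : 0 ≤ c) (hc1 : c < 1) (hx : 1 ≤ x) :
    (1 + c * √(x - 1)) / (1 - c ^ 2) ≤ (1 - c)⁻¹ * √x := by
  have h1 : 1 ≤ √x := Real.one_le_sqrt.mpr hx
  have h2 : √(x - 1) ≤ √x := Real.sqrt_le_sqrt (by linarith)
  rw [div_le_iff₀ (by nlinarith), show 1 - c ^ 2 = (1 - c) * (1 + c) by ring, ← mul_assoc,
    mul_comm _ (1 - c), ← mul_assoc, mul_inv_cancel₀ (by linarith), one_mul]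
  nlinarith [mul_le_mul_of_nonneg_left h2 hc0]

/-- Appendix C: for `Σ¹ = αA + (1 − α)I` with `α = c/√(p−1)` and
`Σ⁰ = I`, the eigenvalues of `Σ¹` lie in `[1 − c, 1 + c]` with both endpoints attained,
and the covariate-shift factor `C_Σ` is of exact order `√p`; in particular it diverges
with `p`. -/
theorem covariate_shift_factor_diverges (c : ℝ) (hc0 : 0 < c) (hc1 : c < 1) :
    ∃ a1 a2 : ℝ, 0 < a1 ∧ 0 < a2 ∧
      ∀ p : ℕ, 2 ≤ p →
        ∃ hS : (shiftedCov p c).IsHermitian,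
          (∀ i, 1 - c ≤ hS.eigenvalues i ∧ hS.eigenvalues i ≤ 1 + c) ∧
          (∃ i, hS.eigenvalues i = 1 - c) ∧
          (∃ i, hS.eigenvalues i = 1 + c) ∧
          a1 * Real.sqrt p ≤ covShiftFactor p c ∧
          covShiftFactor p c ≤ a2 * Real.sqrt p := by
  refine ⟨c / 2, (1 - c)⁻¹, by positivity, inv_pos.mpr (sub_pos.mpr hc1), fun p hp =>
    ⟨shiftedCov_isHermitian p c, fun i => ?_, ?_, ?_, ?_, ?_⟩⟩
  · exact (shiftedCov_isHermitian p c).eigenvalues_mem_Icc_of_pow_three hc0.le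
      (by simpa using shiftedCov_sub_one_pow_three hp c) i
  · simpa [← sub_eq_add_neg] using exists_shiftedCov_eigenvalues_eq hp c (σ := -1) (by norm_num)
  · simpa using exists_shiftedCov_eigenvalues_eq hp c (σ := 1) (by norm_num)
  · rw [covShiftFactor_eq hp hc0.le hc1]
    exact mul_sqrt_le_one_add_mul_sqrt_sub_one_div hc0.le hc1 (by exact_mod_cast hp)
  · rw [covShiftFactor_eq hp hc0.le hc1]
    exact one_add_mul_sqrt_sub_one_div_le hc0.le hc1 (by norm_cast; omega)

end
end
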